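/- Let Γ_u be a permutation-ρ-invariant game (ρ = ∘_i ρ_i with ρu = u) having a pure Nash equilibrium a* such that ρ_k(a*_k) ≠ a*_k for some player k. Then no NE approximator f satisfying both player-permutation-equivariance and opponent-permutation-invariance can output the pure strategy profile a* (i.e., the point-mass product strategy on a*) on input u; likewise, no permutation-equivariant CE/CCE approximator can output the point-mass joint distribution on a*. -/
import Mathlib


open Finset

variable {ι : Type*} [Fintype ι] [DecidableEq ι]
variable {A : ι → Type*} [∀ i, Fintype (A i)] [∀ i, DecidableEq (A i)]

/-- `(ρ_i u)_j(a_i, a_{-i}) = u_j(ρ_i⁻¹ a_i, a_{-i})`. -/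
def permPayoff (i : ι) (ρ : Equiv.Perm (A i)) (u : ι → (∀ i, A i) → ℝ) :
    ι → (∀ i, A i) → ℝ :=
  fun j a => u j (Function.update a i (ρ.symm (a i)))

/-- `(ρ_i π)(a_i, a_{-i}) = π(ρ_i⁻¹ a_i, a_{-i})`. -/
def permJoint (i : ι) (ρ : Equiv.Perm (A i)) (π : (∀ i, A i) → ℝ) :
    (∀ i, A i) → ℝ :=
  fun a => π (Function.update a i (ρ.symm (a i)))

/-- The point-mass (pure) strategy on action `b`. -/
def pureStrat {α : Type*} [DecidableEq α] (b : α) : α → ℝ :=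
  fun c => if c = b then 1 else 0

/-- Apply `(ρ i).symm` on the coordinates in `s`. -/
def permAll (ρ : ∀ i, Equiv.Perm (A i)) (s : Finset ι) (a : ∀ i, A i) : ∀ i, A i :=
  fun i => if i ∈ s then (ρ i).symm (a i) else a i

lemma permAll_insert (ρ : ∀ i, Equiv.Perm (A i)) {s : Finset ι} {i : ι} (hi : i ∉ s)
    (a : ∀ i, A i) :
    permAll ρ (insert i s) a = permAll ρ s (Function.update a i ((ρ i).symm (a i))) := by
  funext m
  by_cases hm : m = i
  · subst hm
    simp [permAll, hi, Function.update]
  · simp [permAll, Function.update, hm]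

lemma permPayoff_permAll (u : ι → (∀ i, A i) → ℝ) (ρ : ∀ i, Equiv.Perm (A i))
    {s : Finset ι} {i : ι} (hi : i ∉ s) :
    permPayoff i (ρ i) (fun j a => u j (permAll ρ s a)) =
      fun j a => u j (permAll ρ (insert i s) a) := by
  funext j a
  simp [permPayoff, permAll_insert ρ hi]

/-- in a permutation-ρ-invariant game with a pure NE `a*` such
that `ρ_k(a*_k) ≠ a*_k` for some player `k`, no PPE+OPI NE approximator can
output the point-mass product strategy on `a*`, and no permutation-equivariant
(C)CE approximator can output the point-mass joint strategy on `a*`. -/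
theorem equivariant_approximators_miss_pure_equilibrium
    (u : ι → (∀ i, A i) → ℝ) (ρ : ∀ i, Equiv.Perm (A i))
    (hinv : (fun (j : ι) (a : ∀ i, A i) => u j (fun i => (ρ i).symm (a i))) = u)
    (astar : ∀ i, A i)
    (hpureNE : ∀ (i : ι) (b : A i), u i (Function.update astar i b) ≤ u i astar)
    (k : ι) (hk : ρ k (astar k) ≠ astar k) :
    (∀ f : (ι → (∀ i, A i) → ℝ) → (∀ j, A j → ℝ),
      (∀ (v : ι → (∀ i, A i) → ℝ) (i : ι) (ρ₀ : Equiv.Perm (A i)),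
        f (permPayoff i ρ₀ v) i = fun b => f v i (ρ₀.symm b)) →
      (∀ (v : ι → (∀ i, A i) → ℝ) (i : ι) (ρ₀ : Equiv.Perm (A i)) (j : ι),
        j ≠ i → f (permPayoff i ρ₀ v) j = f v j) →
      f u ≠ fun i => pureStrat (astar i)) ∧
    (∀ g : (ι → (∀ i, A i) → ℝ) → ((∀ i, A i) → ℝ),
      (∀ (v : ι → (∀ i, A i) → ℝ) (i : ι) (ρ₀ : Equiv.Perm (A i)),
        g (permPayoff i ρ₀ v) = permJoint i ρ₀ (g v)) →
      g u ≠ pureStrat astar) := by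
  have hAll0 : ∀ a : ∀ i, A i, permAll ρ (∅ : Finset ι) a = a := by
    intro a; funext m; simp [permAll]
  have hAllU : ∀ a : ∀ i, A i, permAll ρ (univ : Finset ι) a = fun i => (ρ i).symm (a i) := by
    intro a; funext m; simp [permAll]
  have hU0 : (fun j a => u j (permAll ρ (∅ : Finset ι) a)) = u := by
    funext j a; rw [hAll0]
  have hUuniv : (fun j a => u j (permAll ρ (univ : Finset ι) a)) = u := by
    funext j a
    rw [hAllU]
    exact congrFun (congrFun hinv j) a
  constructor
  · intro f hPPE hOPI hfu
    -- claim about f over finsets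
    have key : ∀ s : Finset ι,
        f (fun j a => u j (permAll ρ s a)) k =
          (if k ∈ s then (fun b => f u k ((ρ k).symm b)) else f u k) := by
      intro s
      induction s using Finset.induction_on with
      | empty => rw [hU0]; simp
      | @insert i s hi ih =>
        rw [← permPayoff_permAll u ρ hi]
        by_cases hik : i = k
        · subst hik
          rw [if_neg hi] at ih
          rw [hPPE, if_pos (Finset.mem_insert_self _ s), ih]
        · rw [hOPI _ _ _ _ (Ne.symm hik), ih]
          simp [Finset.mem_insert, Ne.symm hik]
    have h1 := key univ
    rw [hUuniv] at h1
    simp only [Finset.mem_univ, if_pos] at h1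
    have h2 := congrFun h1 (ρ k (astar k))
    rw [hfu] at h2
    simp [pureStrat, hk] at h2
  · intro g hPE hgu
    have key : ∀ s : Finset ι,
        g (fun j a => u j (permAll ρ s a)) = fun a => g u (permAll ρ s a) := by
      intro s
      induction s using Finset.induction_on with
      | empty =>
        rw [hU0]; funext a; rw [hAll0]
      | @insert i s hi ih =>
        rw [← permPayoff_permAll u ρ hi, hPE, ih]
        funext a
        simp [permJoint, permAll_insert ρ hi]
    have h1 := key univ
    rw [hUuniv] at h1
    have h2 := congrFun h1 (fun i => ρ i (astar i))
    have hne : permAll ρ (univ : Finset ι) (fun i => ρ i (astar i)) = astar := by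
      funext i; simp [permAll]
    rw [hne, hgu] at h2
    have hne2 : (fun i => ρ i (astar i)) ≠ astar := by
      intro h
      exact hk (congrFun h k)
    simp [pureStrat, hne2] at h2
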